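/- arXiv:2108.13935 — 3 statements merged into one kernel-verified Lean document; each statement's English description precedes it below -/
import Mathlib

section
/- Nonparametric moment condition for the bridge function: if E[Y_t(0) | λ_t] = E[h(W_{t,D}(0)) | λ_t] a.s. and Z_t ⫫ (Y_t(0), W_{t,D}(0)) | λ_t, then E[Y_t(0) − h(W_{t,D}(0)) | Z_t] = 0 almost surely. -/
open MeasureTheory ProbabilityTheory

/-- Nonparametric moment condition for the bridge function: if
E[Y_t(0) | λ_t] = E[h(W_{t,D}(0)) | λ_t] a.s. and Z_t ⫫ (Y_t(0), W_{t,D}(0)) | λ_t, then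
E[Y_t(0) − h(W_{t,D}(0)) | Z_t] = 0 a.s. -/
theorem stmt7 {Ω : Type*} [MeasurableSpace Ω] [StandardBorelSpace Ω] [Nonempty Ω]
    (μ : Measure Ω) [IsProbabilityMeasure μ]
    (p : ℕ) {L Z' : Type*} [MeasurableSpace L] [MeasurableSpace Z']
    (lam : Ω → L) (Z : Ω → Z')
    (Y0 : Ω → ℝ) (W0 : Ω → (Fin p → ℝ))
    (h : (Fin p → ℝ) → ℝ) (hmeas : Measurable h)
    (hintY0 : Integrable Y0 μ) (hinth : Integrable (fun ω => h (W0 ω)) μ)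
    (hlam_le : MeasurableSpace.comap lam inferInstance ≤ ‹MeasurableSpace Ω›)
    (hbridge : μ[Y0 | MeasurableSpace.comap lam inferInstance]
      =ᵐ[μ] μ[(fun ω => h (W0 ω)) | MeasurableSpace.comap lam inferInstance])
    (hci : CondIndepFun (MeasurableSpace.comap lam inferInstance) hlam_le
      Z (fun ω => (Y0 ω, W0 ω)) μ) :
    μ[(fun ω => Y0 ω - h (W0 ω)) | MeasurableSpace.comap Z inferInstance] =ᵐ[μ] 0 := by
  classical
  by_cases hZle : MeasurableSpace.comap Z inferInstance ≤ ‹MeasurableSpace Ω›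
  swap
  · rw [condExp_of_not_le hZle]
  set X : Ω → ℝ := fun ω => Y0 ω - h (W0 ω) with hXdef
  have hXint : Integrable X μ := hintY0.sub hinth
  have hX0 : μ[X | MeasurableSpace.comap lam inferInstance] =ᵐ[μ] 0 := by
    refine ((condExp_sub hintY0 hinth _ : μ[X | MeasurableSpace.comap lam inferInstance] =ᵐ[μ] _)).trans ?_
    filter_upwards [hbridge] with ω hω
    simp [Pi.sub_apply, hω]
  -- measurable version of X
  have hXaesm : AEStronglyMeasurable X μ := hXint.1
  set X' : Ω → ℝ := hXaesm.mk X with hX'def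
  have hXX' : X =ᵐ[μ] X' := hXaesm.ae_eq_mk
  have hX'meas : Measurable X' := hXaesm.stronglyMeasurable_mk.measurable
  -- a measurable null superset of {X ≠ X'}
  obtain ⟨N, hNsub, hNmeas, hN0⟩ :=
    exists_measurable_superset_of_null (μ := μ) (s := {ω | X ω ≠ X' ω}) (ae_iff.1 hXX')
  -- the conditional kernel gives N mass zero a.e.
  have hker0 : ∀ᵐ ω ∂μ, condExpKernel μ (MeasurableSpace.comap lam inferInstance) ω N = 0 := by
    have h1 := condExpKernel_ae_eq_condExp (μ := μ) hlam_le hNmeas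
    have h2 : (μ⟦N | MeasurableSpace.comap lam inferInstance⟧) =ᵐ[μ] 0 := by
      have hind : N.indicator (fun _ => (1:ℝ)) =ᵐ[μ] (0 : Ω → ℝ) := by
        filter_upwards [measure_eq_zero_iff_ae_notMem.mp hN0] with ω hω
        simp [Set.indicator_of_notMem hω]
      refine (condExp_congr_ae hind).trans ?_
      rw [condExp_zero]
    filter_upwards [h1.trans h2] with ω hω
    have hω' : (condExpKernel μ (MeasurableSpace.comap lam inferInstance) ω N).toReal = 0 := hω
    exact ((ENNReal.toReal_eq_zero_iff _).1 hω').resolve_right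
      (measure_ne_top (condExpKernel μ (MeasurableSpace.comap lam inferInstance) ω) N)
  have hφ : Measurable (fun q : ℝ × (Fin p → ℝ) => q.1 - h q.2) :=
    measurable_fst.sub (hmeas.comp measurable_snd)
  -- reduce to set integrals over mZ-measurable sets
  refine (ae_eq_condExp_of_forall_setIntegral_eq hZle hXint
    (fun s _ _ => (integrable_zero _ _ _).integrableOn)
    (fun s hs hμs => ?_) (stronglyMeasurable_zero.aestronglyMeasurable)).symm
  obtain ⟨u, hu, rfl⟩ := hs
  have hAmeas : MeasurableSet (Z ⁻¹' u) := hZle _ ⟨u, hu, rfl⟩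
  simp only [Pi.zero_apply, integral_zero]
  symm
  -- the product formula for condexp, with X replaced by X'
  have hprod : ∀ B : Set ℝ, MeasurableSet B →
      (μ⟦Z ⁻¹' u ∩ X' ⁻¹' B | MeasurableSpace.comap lam inferInstance⟧) =ᵐ[μ]
        (μ⟦Z ⁻¹' u | MeasurableSpace.comap lam inferInstance⟧) * (μ⟦X' ⁻¹' B | MeasurableSpace.comap lam inferInstance⟧) := by
    intro B hB
    have hk : ∀ᵐ ω ∂μ, condExpKernel μ (MeasurableSpace.comap lam inferInstance) ω (Z ⁻¹' u ∩ X ⁻¹' B) =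
        condExpKernel μ (MeasurableSpace.comap lam inferInstance) ω (Z ⁻¹' u) * condExpKernel μ (MeasurableSpace.comap lam inferInstance) ω (X ⁻¹' B) :=
      ae_of_ae_trim hlam_le
        (hci (Z ⁻¹' u) (X ⁻¹' B) ⟨u, hu, rfl⟩
          ⟨(fun q : ℝ × (Fin p → ℝ) => q.1 - h q.2) ⁻¹' B, hφ hB, rfl⟩)
    have h1 := condExpKernel_ae_eq_condExp (μ := μ) hlam_le (hAmeas.inter (hX'meas hB))
    have h2 := condExpKernel_ae_eq_condExp (μ := μ) hlam_le hAmeas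
    have h3 := condExpKernel_ae_eq_condExp (μ := μ) hlam_le (hX'meas hB)
    filter_upwards [hk, hker0, h1, h2, h3] with ω hkω h0ω e1 e2 e3
    have swap1 : condExpKernel μ (MeasurableSpace.comap lam inferInstance) ω (Z ⁻¹' u ∩ X' ⁻¹' B) =
        condExpKernel μ (MeasurableSpace.comap lam inferInstance) ω (Z ⁻¹' u ∩ X ⁻¹' B) := by
      refine measure_congr (ae_eq_set.2 ⟨?_, ?_⟩)
      · refine measure_mono_null ?_ h0ω
        rintro ω' ⟨⟨hωu, hωB⟩, hnot⟩
        exact hNsub (fun hEq => hnot ⟨hωu, by simp only [Set.mem_preimage] at hωB ⊢; rw [hEq]; exact hωB⟩)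
      · refine measure_mono_null ?_ h0ω
        rintro ω' ⟨⟨hωu, hωB⟩, hnot⟩
        exact hNsub (fun hEq => hnot ⟨hωu, by simp only [Set.mem_preimage] at hωB ⊢; rw [← hEq]; exact hωB⟩)
    have swap2 : condExpKernel μ (MeasurableSpace.comap lam inferInstance) ω (X' ⁻¹' B) = condExpKernel μ (MeasurableSpace.comap lam inferInstance) ω (X ⁻¹' B) := by
      refine measure_congr (ae_eq_set.2 ⟨?_, ?_⟩)
      · refine measure_mono_null ?_ h0ω
        rintro ω' ⟨hωB, hnot⟩
        exact hNsub (fun hEq => hnot (by simp only [Set.mem_preimage] at hωB ⊢; rw [hEq]; exact hωB))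
      · refine measure_mono_null ?_ h0ω
        rintro ω' ⟨hωB, hnot⟩
        exact hNsub (fun hEq => hnot (by simp only [Set.mem_preimage] at hωB ⊢; rw [← hEq]; exact hωB))
    have hmain : condExpKernel μ (MeasurableSpace.comap lam inferInstance) ω (Z ⁻¹' u ∩ X' ⁻¹' B) =
        condExpKernel μ (MeasurableSpace.comap lam inferInstance) ω (Z ⁻¹' u) * condExpKernel μ (MeasurableSpace.comap lam inferInstance) ω (X' ⁻¹' B) := by
      rw [swap1, swap2]; exact hkω
    show _ = ((μ⟦Z ⁻¹' u | MeasurableSpace.comap lam inferInstance⟧) * (μ⟦X' ⁻¹' B | MeasurableSpace.comap lam inferInstance⟧)) ω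
    simp only [measureReal_def] at e1 e2 e3
    rw [Pi.mul_apply, ← e1, ← e2, ← e3, hmain, ENNReal.toReal_mul]
  -- the bounded MeasurableSpace.comap lam inferInstance-measurable weight
  set g := μ⟦Z ⁻¹' u | MeasurableSpace.comap lam inferInstance⟧ with hgdef
  have hgint : Integrable g μ := integrable_condExp
  have hg0 : 0 ≤ᵐ[μ] g :=
    condExp_nonneg (Filter.Eventually.of_forall fun ω =>
      Set.indicator_nonneg (fun _ _ => zero_le_one) ω)
  have hg1 : g ≤ᵐ[μ] fun _ => (1:ℝ) := by
    have hc : μ[(fun _ => (1:ℝ)) | MeasurableSpace.comap lam inferInstance] = fun _ => (1:ℝ) := condExp_const hlam_le 1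
    have := condExp_mono (μ := μ) (m := MeasurableSpace.comap lam inferInstance)
      ((integrable_const (1:ℝ)).indicator hAmeas) (integrable_const (1:ℝ))
      (Filter.Eventually.of_forall fun ω =>
        Set.indicator_le' (fun _ _ => le_rfl) (fun _ _ => zero_le_one) ω)
    rwa [hc] at this
  set g' : Ω → ℝ := fun ω => max 0 (min (g ω) 1) with hg'def
  have hg'sm : StronglyMeasurable[MeasurableSpace.comap lam inferInstance] g' :=
    (measurable_const.max
      (stronglyMeasurable_condExp.measurable.min measurable_const)).stronglyMeasurable
  have hg'ae : g' =ᵐ[μ] g := by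
    filter_upwards [hg0, hg1] with ω h0 h1
    show max 0 (min (g ω) 1) = g ω
    have h0' : (0:ℝ) ≤ g ω := h0
    have h1' : g ω ≤ 1 := h1
    rw [min_eq_left h1', max_eq_right h0']
  have hg'0 : ∀ ω, 0 ≤ g' ω := fun ω => le_max_left _ _
  have hg'1 : ∀ ω, g' ω ≤ 1 := fun ω => max_le zero_le_one (min_le_right _ _)
  have hg'bd : ∃ C, ∀ ω, ‖g' ω‖ ≤ C :=
    ⟨1, fun ω => by rw [Real.norm_eq_abs, abs_of_nonneg (hg'0 ω)]; exact hg'1 ω⟩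
  have hg'aesm : AEStronglyMeasurable g' μ := (hg'sm.mono hlam_le).aestronglyMeasurable
  have hg'int : Integrable g' μ := hgint.congr hg'ae.symm
  -- key real identity
  have key : ∀ B : Set ℝ, MeasurableSet B →
      ∫ ω in X' ⁻¹' B, g' ω ∂μ = (μ (Z ⁻¹' u ∩ X' ⁻¹' B)).toReal := by
    intro B hB
    have htm : MeasurableSet (X' ⁻¹' B) := hX'meas hB
    have h1t : Integrable ((X' ⁻¹' B).indicator fun _ => (1:ℝ)) μ :=
      (integrable_const (1:ℝ)).indicator htm
    have hg1t : Integrable (g' * (X' ⁻¹' B).indicator fun _ => (1:ℝ)) μ :=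
      h1t.bdd_mul hg'aesm (Filter.Eventually.of_forall hg'bd.choose_spec)
    have hpull := condExp_mul_of_stronglyMeasurable_left hg'sm hg1t h1t
    calc ∫ ω in X' ⁻¹' B, g' ω ∂μ
        = ∫ ω, (g' * (X' ⁻¹' B).indicator fun _ => (1:ℝ)) ω ∂μ := by
          rw [← integral_indicator htm]
          refine integral_congr_ae (Filter.Eventually.of_forall fun ω => ?_)
          by_cases hω : ω ∈ X' ⁻¹' B <;>
            simp [Set.indicator_of_mem, Set.indicator_of_notMem, hω]
      _ = ∫ ω, (μ[g' * (X' ⁻¹' B).indicator fun _ => (1:ℝ) | MeasurableSpace.comap lam inferInstance]) ω ∂μ :=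
          (integral_condExp hlam_le).symm
      _ = ∫ ω, ((μ⟦Z ⁻¹' u | MeasurableSpace.comap lam inferInstance⟧) * (μ⟦X' ⁻¹' B | MeasurableSpace.comap lam inferInstance⟧)) ω ∂μ := by
          refine integral_congr_ae (hpull.trans ?_)
          filter_upwards [hg'ae] with ω hω
          simp only [Pi.mul_apply]
          rw [hω]
      _ = ∫ ω, (μ⟦Z ⁻¹' u ∩ X' ⁻¹' B | MeasurableSpace.comap lam inferInstance⟧) ω ∂μ :=
          (integral_congr_ae (hprod B hB)).symm
      _ = ∫ ω, (Z ⁻¹' u ∩ X' ⁻¹' B).indicator (fun _ => (1:ℝ)) ω ∂μ :=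
          integral_condExp hlam_le
      _ = (μ (Z ⁻¹' u ∩ X' ⁻¹' B)).toReal := integral_indicator_one (hAmeas.inter htm)
  -- the two pushforward measures agree
  set gnn : Ω → NNReal := fun ω => (g' ω).toNNReal with hgnndef
  have hgnnmeas : Measurable gnn :=
    measurable_real_toNNReal.comp (hg'sm.measurable.mono hlam_le le_rfl)
  have hνeq : (μ.restrict (Z ⁻¹' u)).map X'
      = (μ.withDensity fun ω => (gnn ω : ENNReal)).map X' := by
    refine Measure.ext fun B hB => ?_
    rw [Measure.map_apply hX'meas hB, Measure.map_apply hX'meas hB,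
      Measure.restrict_apply (hX'meas hB), withDensity_apply _ (hX'meas hB)]
    have hnn : (fun ω => (gnn ω : ENNReal)) = fun ω => ENNReal.ofReal (g' ω) := rfl
    rw [Set.inter_comm, hnn,
      ← ofReal_integral_eq_lintegral_ofReal hg'int.integrableOn
        (Filter.Eventually.of_forall hg'0 : (0 : Ω → ℝ) ≤ᵐ[μ.restrict (X' ⁻¹' B)] g'),
      key B hB, ENNReal.ofReal_toReal (measure_ne_top _ _)]
  -- final computation
  have hgXint : Integrable (g' * X) μ := hXint.bdd_mul hg'aesm (Filter.Eventually.of_forall hg'bd.choose_spec)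
  have hfinal : ∫ ω, (g' * X) ω ∂μ = 0 := by
    have hpull := condExp_mul_of_stronglyMeasurable_left hg'sm hgXint hXint
    calc ∫ ω, (g' * X) ω ∂μ
        = ∫ ω, (μ[g' * X | MeasurableSpace.comap lam inferInstance]) ω ∂μ := (integral_condExp hlam_le).symm
      _ = ∫ ω, (0 : Ω → ℝ) ω ∂μ := by
          refine integral_congr_ae (hpull.trans ?_)
          filter_upwards [hX0] with ω hω
          simp only [Pi.mul_apply, Pi.zero_apply]
          rw [hω]
          simp
      _ = 0 := by simp
  calc ∫ x in Z ⁻¹' u, X x ∂μ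
      = ∫ x in Z ⁻¹' u, X' x ∂μ := integral_congr_ae (ae_restrict_of_ae hXX')
    _ = ∫ y, y ∂((μ.restrict (Z ⁻¹' u)).map X') :=
        (integral_map hX'meas.aemeasurable aestronglyMeasurable_id).symm
    _ = ∫ y, y ∂((μ.withDensity fun ω => (gnn ω : ENNReal)).map X') := by rw [hνeq]
    _ = ∫ ω, X' ω ∂(μ.withDensity fun ω => (gnn ω : ENNReal)) :=
        integral_map hX'meas.aemeasurable aestronglyMeasurable_id
    _ = ∫ ω, gnn ω • X' ω ∂μ := integral_withDensity_eq_integral_smul hgnnmeas X'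
    _ = ∫ ω, g' ω * X' ω ∂μ := by
        refine integral_congr_ae (Filter.Eventually.of_forall fun ω => ?_)
        simp [NNReal.smul_def, hgnndef, Real.coe_toNNReal _ (hg'0 ω)]
    _ = ∫ ω, (g' * X) ω ∂μ := by
        refine integral_congr_ae ?_
        filter_upwards [hXX'] with ω hω
        simp only [Pi.mul_apply]
        rw [hω]
    _ = 0 := hfinal
end

section
/- Count-outcome bridge function via moment generating functions: suppose conditional on λ_t ∈ ℝ, the donor outcome W_t is Normal(u_1 λ_t, σ²) and E[Y_t(0) | λ_t] = exp(u_0 λ_t) with u_1 ≠ 0. Then the function h(w) = exp(a w + b) with a = u_0/u_1 and b = −a²σ²/2 satisfies E[h(W_t) | λ_t] = E[Y_t(0) | λ_t] almost surely. -/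
open MeasureTheory ProbabilityTheory

/-- Count-outcome bridge function via the Gaussian moment generating function: if,
conditional on λ_t, E[exp(aW_t) | λ_t] = exp(a u_1 λ_t + a²σ²/2) for all a, and
E[Y_t(0) | λ_t] = exp(u_0 λ_t) with u_1 ≠ 0, then h(w) = exp(aw + b), a = u_0/u_1,
b = −a²σ²/2, satisfies E[h(W_t) | λ_t] = E[Y_t(0) | λ_t] a.s. -/
theorem stmt8 {Ω : Type*} [MeasurableSpace Ω] (μ : Measure Ω) [IsProbabilityMeasure μ]
    (lam : Ω → ℝ) (W : Ω → ℝ) (Y0 : Ω → ℝ)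
    (u0 u1 σ : ℝ) (hσ : 0 < σ) (hu1 : u1 ≠ 0)
    (hmgf : ∀ a : ℝ, μ[(fun ω => Real.exp (a * W ω)) |
        MeasurableSpace.comap lam inferInstance]
      =ᵐ[μ] fun ω => Real.exp (a * u1 * lam ω + a ^ 2 * σ ^ 2 / 2))
    (hY : μ[Y0 | MeasurableSpace.comap lam inferInstance]
      =ᵐ[μ] fun ω => Real.exp (u0 * lam ω)) :
    μ[(fun ω => Real.exp ((u0 / u1) * W ω + -((u0 / u1) ^ 2 * σ ^ 2 / 2))) |
        MeasurableSpace.comap lam inferInstance]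
      =ᵐ[μ] μ[Y0 | MeasurableSpace.comap lam inferInstance] := by
  set a := u0 / u1 with ha
  set m := MeasurableSpace.comap lam (inferInstance : MeasurableSpace ℝ)
  have hfun : (fun ω => Real.exp (a * W ω + -(a ^ 2 * σ ^ 2 / 2)))
      = Real.exp (-(a ^ 2 * σ ^ 2 / 2)) • fun ω => Real.exp (a * W ω) := by
    funext ω
    simp [Real.exp_add, mul_comm]
  have hsmul : μ[(fun ω => Real.exp (a * W ω + -(a ^ 2 * σ ^ 2 / 2))) | m]
      =ᵐ[μ] Real.exp (-(a ^ 2 * σ ^ 2 / 2)) • μ[(fun ω => Real.exp (a * W ω)) | m] := by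
    rw [hfun]; exact condExp_smul _ _ _
  refine hsmul.trans ?_
  have h1 := hmgf a
  filter_upwards [h1, hY] with ω h1ω h2ω
  simp only [Pi.smul_apply, smul_eq_mul, h1ω, h2ω]
  rw [← Real.exp_add]
  congr 1
  field_simp [ha]
  have hc : u0 / u1 * u1 = u0 := div_mul_cancel₀ _ hu1
  linear_combination (2 * lam ω) * hc
end

section
/- Completeness transfers uniqueness: suppose (i) E[Y_t(0) | λ_t] = E[h(W_{t,D}) | λ_t] a.s., (ii) Z_t ⫫ (Y_t(0), W_{t,D}) | λ_t, and (iii) the distribution of W_{t,D} is complete with respect to Z_t, i.e., for any integrable measurable function m, E[m(W_{t,D}) | Z_t] = 0 a.s. implies m(W_{t,D}) = 0 a.s. Then h is the unique (up to almost-sure equality on the distribution of W_{t,D}) solution of E[Y_t − h'(W_{t,D}) | Z_t] = 0. -/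
open MeasureTheory ProbabilityTheory

/-- Completeness transfers uniqueness: under the bridge condition, conditional
independence of Z_t, and completeness of W_{t,D} with respect to Z_t, the bridge function
h is the unique (up to a.s. equality in the distribution of W_{t,D}) solution of
E[Y_t − h'(W_{t,D}) | Z_t] = 0. -/
theorem stmt15 {Ω : Type*} [MeasurableSpace Ω] [StandardBorelSpace Ω] [Nonempty Ω]
    (μ : Measure Ω) [IsProbabilityMeasure μ]
    (p : ℕ) {L Z' : Type*} [MeasurableSpace L] [MeasurableSpace Z']
    (lam : Ω → L) (Z : Ω → Z')
    (Y : Ω → ℝ) (W : Ω → (Fin p → ℝ))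
    (h : (Fin p → ℝ) → ℝ) (hmeas : Measurable h)
    (hintY : Integrable Y μ) (hinth : Integrable (fun ω => h (W ω)) μ)
    (hlam_le : MeasurableSpace.comap lam inferInstance ≤ ‹MeasurableSpace Ω›)
    -- (i) bridge condition (in the pre-treatment period Y = Y(0)):
    (hbridge : μ[Y | MeasurableSpace.comap lam inferInstance]
      =ᵐ[μ] μ[(fun ω => h (W ω)) | MeasurableSpace.comap lam inferInstance])
    -- (ii) Z ⫫ (Y(0), W) | λ :
    (hci : CondIndepFun (MeasurableSpace.comap lam inferInstance) hlam_le
      Z (fun ω => (Y ω, W ω)) μ)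
    -- (iii) completeness of W with respect to Z :
    (hcomplete : ∀ m : (Fin p → ℝ) → ℝ, Measurable m →
      Integrable (fun ω => m (W ω)) μ →
      (μ[(fun ω => m (W ω)) | MeasurableSpace.comap Z inferInstance] =ᵐ[μ] 0) →
      (fun ω => m (W ω)) =ᵐ[μ] 0) :
    (μ[(fun ω => Y ω - h (W ω)) | MeasurableSpace.comap Z inferInstance] =ᵐ[μ] 0) ∧
    (∀ h' : (Fin p → ℝ) → ℝ, Measurable h' → Integrable (fun ω => h' (W ω)) μ →
      (μ[(fun ω => Y ω - h' (W ω)) | MeasurableSpace.comap Z inferInstance] =ᵐ[μ] 0) →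
      (fun ω => h' (W ω)) =ᵐ[μ] fun ω => h (W ω)) := by
  set g : Ω → ℝ := fun ω => Y ω - h (W ω) with hg_def
  have hg_int : Integrable g μ := hintY.sub hinth
  -- E[g | λ] = 0
  have hg0 : μ[g | (MeasurableSpace.comap lam inferInstance)] =ᵐ[μ] 0 := by
    have h1 := condExp_sub (μ := μ) (m := (MeasurableSpace.comap lam inferInstance)) hintY hinth
    have h2 : Y - (fun ω => h (W ω)) = g := rfl
    rw [h2] at h1
    refine h1.trans ?_
    filter_upwards [hbridge] with ω hω
    simp [Pi.sub_apply, hω]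
  -- measurable version of g
  obtain ⟨gg, hggsm, hggae⟩ : ∃ gg : Ω → ℝ, StronglyMeasurable gg ∧ g =ᵐ[μ] gg :=
    ⟨hg_int.1.mk g, hg_int.1.stronglyMeasurable_mk, hg_int.1.ae_eq_mk⟩
  have hggmeas : Measurable gg := hggsm.measurable
  have hggint : Integrable gg μ := hg_int.congr hggae
  set κ := condExpKernel μ (MeasurableSpace.comap lam inferInstance) with hκdef
  -- the exceptional set where g ≠ gg
  set N : Set Ω := toMeasurable μ {ω | g ω ≠ gg ω} with hNdef
  have hN_meas : MeasurableSet N := measurableSet_toMeasurable μ _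
  have hN_null : μ N = 0 := by
    rw [measure_toMeasurable]
    exact ae_iff.mp hggae
  have hκN : ∀ᵐ ω ∂μ, κ ω N = 0 := by
    have h1 : (fun ω => (κ ω N).toReal) =ᵐ[μ] μ⟦N | (MeasurableSpace.comap lam inferInstance)⟧ :=
      condExpKernel_ae_eq_condExp hlam_le hN_meas
    have h2 : μ⟦N | (MeasurableSpace.comap lam inferInstance)⟧ =ᵐ[μ] 0 := by
      have hz : N.indicator (fun _ => (1 : ℝ)) =ᵐ[μ] 0 := by
        filter_upwards [measure_eq_zero_iff_ae_notMem.mp hN_null] with ω hω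
        simp [Set.indicator_of_notMem hω]
      exact (condExp_congr_ae hz).trans (by rw [condExp_zero])
    filter_upwards [h1.trans h2] with ω hω
    simpa [ENNReal.toReal_eq_zero_iff, measure_ne_top (κ ω) N] using hω
  have hgκ : ∀ᵐ ω ∂μ, g =ᵐ[κ ω] gg := by
    filter_upwards [hκN] with ω hω
    exact ae_iff.mpr (measure_mono_null (subset_toMeasurable μ _) hω)
  -- conditional independence of Z and g
  have hφ : Measurable (fun q : ℝ × (Fin p → ℝ) => q.1 - h q.2) :=
    measurable_fst.sub (hmeas.comp measurable_snd)
  have hci' : CondIndepFun (MeasurableSpace.comap lam inferInstance) hlam_le Z g μ := by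
    have := hci.comp measurable_id hφ
    exact this
  -- part 1
  have part1 : μ[g | (MeasurableSpace.comap Z inferInstance)] =ᵐ[μ] 0 := by
    by_cases hZle : (MeasurableSpace.comap Z inferInstance) ≤ ‹MeasurableSpace Ω›
    swap
    · rw [condExp_of_not_le hZle]
    -- every set in (MeasurableSpace.comap Z inferInstance) gives zero integral of g
    have key : ∀ s : Set Ω, MeasurableSet[(MeasurableSpace.comap Z inferInstance)] s → ∫ x in s, g x ∂μ = 0 := by
      rintro s hs
      obtain ⟨B, hB, rfl⟩ := hs
      have hs_meas : MeasurableSet (Z ⁻¹' B) := hZle _ ⟨B, hB, rfl⟩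
      -- independence facts, a.e. simultaneously over rational Iic sets
      have hInd : ∀ᵐ ω ∂μ, ∀ q : ℚ,
          κ ω (Z ⁻¹' B ∩ g ⁻¹' (Set.Iic (q : ℝ)))
            = κ ω (Z ⁻¹' B) * κ ω (g ⁻¹' (Set.Iic (q : ℝ))) := by
        rw [ae_all_iff]
        intro q
        exact ae_of_ae_trim hlam_le
          (hci' (Z ⁻¹' B) (g ⁻¹' (Set.Iic (q : ℝ))) ⟨B, hB, rfl⟩
            ⟨Set.Iic (q : ℝ), measurableSet_Iic, rfl⟩)
      have hcond_g : ∀ᵐ ω ∂μ, ∫ x, gg x ∂κ ω = 0 := by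
        filter_upwards [(condExp_ae_eq_integral_condExpKernel hlam_le hggint).symm.trans
          ((condExp_congr_ae hggae.symm).trans hg0)] with ω hω
        simpa using hω
      have hmain : ∀ᵐ ω ∂μ, ∫ x, (Z ⁻¹' B).indicator gg x ∂κ ω = 0 := by
        filter_upwards [hgκ, hInd, hcond_g] with ω hωae hωind hωg
        -- transfer independence to gg
        have hsets : ∀ q : ℚ,
            κ ω (gg ⁻¹' (Set.Iic (q : ℝ)) ∩ Z ⁻¹' B)
              = κ ω (Z ⁻¹' B) * κ ω (gg ⁻¹' (Set.Iic (q : ℝ))) := by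
          intro q
          have e1 : (gg ⁻¹' (Set.Iic (q : ℝ)) ∩ Z ⁻¹' B : Set Ω)
              =ᵐ[κ ω] (Z ⁻¹' B ∩ g ⁻¹' (Set.Iic (q : ℝ)) : Set Ω) :=
            Filter.eventuallyEq_set.mpr (by
              filter_upwards [hωae] with x hx
              simp [Set.mem_preimage, Set.mem_Iic, hx, and_comm])
          have e2 : (gg ⁻¹' (Set.Iic (q : ℝ)) : Set Ω)
              =ᵐ[κ ω] (g ⁻¹' (Set.Iic (q : ℝ)) : Set Ω) :=
            Filter.eventuallyEq_set.mpr (by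
              filter_upwards [hωae] with x hx
              simp [Set.mem_preimage, Set.mem_Iic, hx])
          rw [measure_congr e1, measure_congr e2]
          exact hωind q
        -- two finite measures on ℝ agreeing on the π-system of rational Iic
        have hmapeq :
            ((κ ω).restrict (Z ⁻¹' B)).map gg = κ ω (Z ⁻¹' B) • (κ ω).map gg := by
          refine ext_of_generate_finite (⋃ a : ℚ, {Set.Iic (a : ℝ)})
            (BorelSpace.measurable_eq.trans Real.borel_eq_generateFrom_Iic_rat)
            Real.isPiSystem_Iic_rat ?_ ?_
          · rintro S hS
            simp only [Set.mem_iUnion, Set.mem_singleton_iff] at hS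
            obtain ⟨q, rfl⟩ := hS
            rw [Measure.map_apply hggmeas measurableSet_Iic,
              Measure.restrict_apply (hggmeas measurableSet_Iic),
              Measure.smul_apply, Measure.map_apply hggmeas measurableSet_Iic,
              hsets q, smul_eq_mul]
          · simp [Measure.map_apply hggmeas MeasurableSet.univ, Set.preimage_univ,
              Measure.restrict_apply_univ, Measure.smul_apply, measure_univ]
        calc ∫ x, (Z ⁻¹' B).indicator gg x ∂κ ω
            = ∫ x in Z ⁻¹' B, gg x ∂κ ω := integral_indicator hs_meas
          _ = ∫ y, y ∂(((κ ω).restrict (Z ⁻¹' B)).map gg) :=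
              (integral_map hggmeas.aemeasurable aestronglyMeasurable_id).symm
          _ = ∫ y, y ∂(κ ω (Z ⁻¹' B) • (κ ω).map gg) := by rw [hmapeq]
          _ = (κ ω (Z ⁻¹' B)).toReal • ∫ y, y ∂((κ ω).map gg) :=
              integral_smul_measure _ _
          _ = (κ ω (Z ⁻¹' B)).toReal • ∫ x, gg x ∂κ ω :=
              congrArg (fun r => (κ ω (Z ⁻¹' B)).toReal • r)
                (integral_map hggmeas.aemeasurable aestronglyMeasurable_id)
          _ = 0 := by rw [hωg]; simp
      -- conclude via conditional expectation w.r.t. λ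
      have hf1_int : Integrable ((Z ⁻¹' B).indicator gg) μ := hggint.indicator hs_meas
      have hcond : μ[(Z ⁻¹' B).indicator gg | (MeasurableSpace.comap lam inferInstance)] =ᵐ[μ] 0 :=
        (condExp_ae_eq_integral_condExpKernel hlam_le hf1_int).trans hmain
      calc ∫ x in Z ⁻¹' B, g x ∂μ
          = ∫ x in Z ⁻¹' B, gg x ∂μ := integral_congr_ae (ae_restrict_of_ae hggae)
        _ = ∫ x, (Z ⁻¹' B).indicator gg x ∂μ := (integral_indicator hs_meas).symm
        _ = ∫ x, (μ[(Z ⁻¹' B).indicator gg | (MeasurableSpace.comap lam inferInstance)]) x ∂μ :=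
            (integral_condExp hlam_le).symm
        _ = 0 := by
            rw [integral_congr_ae hcond]
            simp
    refine (ae_eq_condExp_of_forall_setIntegral_eq hZle hg_int
      (fun s _ _ => integrableOn_zero) (fun s hs hμs => ?_) ?_).symm
    · rw [key s hs]
      simp
    · exact StronglyMeasurable.aestronglyMeasurable
        (@stronglyMeasurable_zero Ω ℝ (MeasurableSpace.comap Z inferInstance) _ _)
  refine ⟨part1, ?_⟩
  intro h' hmeas' hint' hsol'
  have hm_int : Integrable (fun ω => h (W ω) - h' (W ω)) μ := hinth.sub hint'
  have hdiff : μ[(fun ω => h (W ω) - h' (W ω)) | (MeasurableSpace.comap Z inferInstance)] =ᵐ[μ] 0 := by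
    have hfg : (fun ω => h (W ω) - h' (W ω))
        = (fun ω => Y ω - h' (W ω)) - (fun ω => Y ω - h (W ω)) := by
      funext ω
      simp only [Pi.sub_apply]
      ring
    rw [hfg]
    refine ((condExp_sub (f := fun ω => Y ω - h' (W ω)) (g := fun ω => Y ω - h (W ω))
      (hintY.sub hint') hg_int _)).trans ?_
    filter_upwards [hsol', part1] with ω h1 h2
    simp [Pi.sub_apply, h1, h2]
    exact h2
  have := hcomplete (fun w => h w - h' w) (hmeas.sub hmeas') hm_int hdiff
  filter_upwards [this] with ω hω
  have : h (W ω) - h' (W ω) = 0 := hω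
  linarith
end
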